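/- Let V be a finite set and c : V × V → [0,∞) a symmetric function with c(x) := Σ_{y∈V} c(x,y) > 0 for every x ∈ V, and set C = Σ_{x∈V} c(x). Let (X_k)_{k≥0} be the Markov chain with transition probabilities P(x,y) = c(x,y)/c(x), started from the stationary distribution π(x) = c(x)/C. For non-empty disjoint sets A, B ⊆ V, let E(A before B) denote the event that there exists k ≥ 1 with X_k ∈ B and X_j ∉ A for all 1 ≤ j ≤ k (the chain visits B strictly before returning to A). Then P(X_0 ∈ A and E(A before B)) = C_eff(A,B)/C. -/

import Mathlib

open scoped ENNReal
namespace Paper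
abbrev Vertex (m : ℕ → ℕ) (n : ℕ) := (i : Fin n) → Fin (m i)
variable {m : ℕ → ℕ}
def restr {n : ℕ} (w : Vertex m (n + 1)) : Vertex m n := fun i => w i.castSucc
def restrLe {n N : ℕ} (h : n ≤ N) (w : Vertex m N) : Vertex m n :=
  fun i => w ⟨i, lt_of_lt_of_le i.2 h⟩
def AutT (m : ℕ → ℕ) : Subgroup (∀ n, Equiv.Perm (Vertex m n)) where
  carrier := {g | ∀ (n : ℕ) (w : Vertex m (n + 1)), restr (g (n + 1) w) = g n (restr w)}
  one_mem' := by intro n w; rfl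
  mul_mem' := by
    intro a b ha hb n w
    show restr ((a (n+1)) ((b (n+1)) w)) = (a n) ((b n) (restr w))
    rw [ha, hb]
  inv_mem' := by
    intro a ha n w
    show restr ((a (n+1))⁻¹ w) = (a n)⁻¹ (restr w)
    apply (a n).injective
    have h1 := ha n ((a (n+1))⁻¹ w)
    simp only [Equiv.Perm.coe_inv, Equiv.apply_symm_apply] at h1
    exact h1.symm.trans ((a n).apply_symm_apply _).symm
def app {n : ℕ} (g : AutT m) (v : Vertex m n) : Vertex m n := g.val n v
theorem restrLe_app (g : AutT m) : ∀ {N n : ℕ} (h : n ≤ N) (w : Vertex m N),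
    restrLe h (g.val N w) = g.val n (restrLe h w) := by
  intro N
  induction N with
  | zero =>
    intro n h w
    have hn : n = 0 := Nat.le_zero.mp h
    subst hn; rfl
  | succ N ih =>
    intro n h w
    rcases Nat.eq_or_lt_of_le h with rfl | h'
    · rfl
    · have hN : n ≤ N := Nat.lt_succ_iff.mp h'
      calc restrLe h (g.val (N+1) w) = restrLe hN (restr (g.val (N+1) w)) := rfl
        _ = restrLe hN (g.val N (restr w)) := by rw [g.prop N w]
        _ = g.val n (restrLe hN (restr w)) := ih hN _
        _ = g.val n (restrLe h w) := rfl
abbrev shift (m : ℕ → ℕ) (n : ℕ) : ℕ → ℕ := fun i => m (n + i)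
def vappend {n k : ℕ} (v : Vertex (shift m n) k) (w : Vertex m n) : Vertex m (n + k) :=
  fun i => if h : (i : ℕ) < n then w ⟨i, h⟩
    else Fin.cast (congrArg m (by omega : n + ((i : ℕ) - n) = (i : ℕ)))
      (v ⟨(i : ℕ) - n, by omega⟩)
def topPart {n k : ℕ} (u : Vertex m (n + k)) : Vertex (shift m n) k :=
  fun i => u ⟨n + i, by omega⟩

theorem topPart_vappend {n k : ℕ} (v : Vertex (shift m n) k) (w : Vertex m n) :
    topPart (vappend v w) = v := by
  funext i
  simp only [topPart, vappend, Fin.val_mk]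
  rw [dif_neg (by omega)]
  apply Fin.ext
  simp only [Fin.coe_cast]
  exact congrArg (fun t : Fin k => (v t).1) (Fin.ext (by simp))

theorem restrLe_vappend {n k : ℕ} (v : Vertex (shift m n) k) (w : Vertex m n) :
    restrLe (Nat.le_add_right n k) (vappend v w) = w := by
  funext i
  simp only [restrLe, vappend, Fin.val_mk]
  rw [dif_pos i.2]

theorem vappend_topPart {n k : ℕ} (u : Vertex m (n + k)) :
    vappend (topPart u) (restrLe (Nat.le_add_right n k) u) = u := by
  funext i
  by_cases h : (i : ℕ) < n
  · simp only [vappend, restrLe]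
    rw [dif_pos h]
  · simp only [vappend, topPart, Fin.val_mk]
    rw [dif_neg h]
    apply Fin.ext
    simp only [Fin.coe_cast]
    exact congrArg (fun t : Fin (n+k) => (u t).1) (Fin.ext (by simp; omega))

theorem restr_vappend {n k : ℕ} (v : Vertex (shift m n) (k + 1)) (w : Vertex m n) :
    restr (n := n + k) (vappend (n := n) (k := k + 1) v w) = vappend (restr v) w := by
  funext i
  by_cases h : (i : ℕ) < n
  · show vappend v w (Fin.castSucc i) = vappend (restr v) w i
    simp only [vappend]
    rw [dif_pos (show ((Fin.castSucc i : Fin (n+k+1)) : ℕ) < n from h), dif_pos h]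
    rfl
  · show vappend v w (Fin.castSucc i) = vappend (restr v) w i
    simp only [vappend]
    rw [dif_neg (show ¬ ((Fin.castSucc i : Fin (n+k+1)) : ℕ) < n from h), dif_neg h]
    rfl

def secFun (g : AutT m) {n : ℕ} (w : Vertex m n) (k : ℕ)
    (v : Vertex (shift m n) k) : Vertex (shift m n) k :=
  topPart (g.val (n + k) (vappend v w))

theorem secFun_spec (g : AutT m) {n : ℕ} (w : Vertex m n) (k : ℕ)
    (v : Vertex (shift m n) k) :
    g.val (n + k) (vappend v w) = vappend (secFun g w k v) (g.val n w) := by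
  have h1 : restrLe (Nat.le_add_right n k) (g.val (n + k) (vappend v w)) = g.val n w := by
    rw [restrLe_app, restrLe_vappend]
  conv_lhs => rw [← vappend_topPart (g.val (n + k) (vappend v w))]
  rw [h1]
  rfl

theorem coe_inv_app (g : AutT m) (N : ℕ) (u : Vertex m N) :
    (g⁻¹ : AutT m).val N ((g : AutT m).val N u) = u := by
  have h : ((g⁻¹ : AutT m) : ∀ n, Equiv.Perm (Vertex m n)) = (↑g)⁻¹ := rfl
  rw [h]
  exact Equiv.symm_apply_apply (g.val N) u

theorem secFun_left_inv (g : AutT m) {n : ℕ} (w : Vertex m n) (k : ℕ)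
    (v : Vertex (shift m n) k) :
    secFun g⁻¹ (g.val n w) k (secFun g w k v) = v := by
  show topPart ((g⁻¹ : AutT m).val (n+k) (vappend (secFun g w k v) (g.val n w))) = v
  rw [← secFun_spec g w k v, coe_inv_app, topPart_vappend]

def sectionEquiv (g : AutT m) {n : ℕ} (w : Vertex m n) (k : ℕ) :
    Equiv.Perm (Vertex (shift m n) k) where
  toFun := secFun g w k
  invFun := secFun g⁻¹ (g.val n w) k
  left_inv v := secFun_left_inv g w k v
  right_inv v := by
    have h2 : (g⁻¹ : AutT m)⁻¹ = g := inv_inv g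
    have h3 : (g⁻¹ : AutT m).val n (g.val n w) = w := coe_inv_app g n w
    calc secFun g w k (secFun g⁻¹ (g.val n w) k v)
        = secFun (g⁻¹)⁻¹ ((g⁻¹ : AutT m).val n (g.val n w)) k
            (secFun g⁻¹ (g.val n w) k v) := by rw [h2, h3]
      _ = v := secFun_left_inv g⁻¹ (g.val n w) k v

theorem secFun_restr (g : AutT m) {n : ℕ} (w : Vertex m n) (k : ℕ)
    (v : Vertex (shift m n) (k + 1)) :
    restr (secFun g w (k + 1) v) = secFun g w k (restr v) := by
  show restr (topPart (g.val (n + (k+1)) (vappend v w)))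
      = topPart (g.val (n + k) (vappend (restr v) w))
  rw [← restr_vappend (n := n) (k := k) v w, ← g.prop (n + k) (vappend (n := n) (k := k + 1) v w)]
  rfl

/-- The section `g|_w` of a tree automorphism `g` at the level-`n` vertex `w`:
the unique automorphism of the shifted tree satisfying `(vw)·g = (v·g|_w)(w·g)`. -/
def sectionAut (g : AutT m) {n : ℕ} (w : Vertex m n) : AutT (shift m n) :=
  ⟨fun k => sectionEquiv g w k, fun k v => secFun_restr g w k v⟩

/-! ### Distinguished vertices and predicates -/

/-- The level-`n` vertex `0⋯0` on the `0`-ray. -/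
def rayV (hm : ∀ i, 0 < m i) (n : ℕ) : Vertex m n := fun i => ⟨0, hm i⟩

/-- The level-`(n+1)` neighbour `x0⋯0` of the `0`-ray: its only (possibly) non-zero
letter is the leading one, equal to `x`. -/
def nbrV (hm : ∀ i, 0 < m i) {n : ℕ} (x : Fin (m n)) : Vertex m (n + 1) :=
  fun i => if h : (i : ℕ) = n then Fin.cast (congrArg m h).symm x else ⟨0, hm i⟩

/-- The level-`n` vertex obtained from `w0` by prepending zeros. -/
def padZero (hm : ∀ i, 0 < m i) {n₀ : ℕ} (w0 : Vertex m n₀) (n : ℕ) : Vertex m n :=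
  fun i => if h : (i : ℕ) < n₀ then w0 ⟨i, h⟩ else ⟨0, hm i⟩

/-- The level-`(n+1)` vertex `x0⋯0w0`: the word `w0` at the bottom, the letter `x`
in the leading position, and zeros in between. -/
def padLead (hm : ∀ i, 0 < m i) {n₀ : ℕ} (w0 : Vertex m n₀) {n : ℕ} (x : Fin (m n)) :
    Vertex m (n + 1) :=
  fun i => if h : (i : ℕ) < n₀ then w0 ⟨i, h⟩
    else if h2 : (i : ℕ) = n then Fin.cast (congrArg m h2).symm x else ⟨0, hm i⟩

/-- `w` lies on the `0`-ray. -/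
def OnRay {n : ℕ} (w : Vertex m n) : Prop := ∀ i, (w i : ℕ) = 0

/-- `w` is a neighbour of the `0`-ray: its leading letter is non-zero and all other
letters are zero. -/
def IsNbr {n : ℕ} (w : Vertex m n) : Prop :=
  ∃ hn : 0 < n, (w ⟨n - 1, by omega⟩ : ℕ) ≠ 0 ∧
    ∀ i : Fin n, (i : ℕ) < n - 1 → (w i : ℕ) = 0

/-- A *rooted* automorphism: it permutes the first level and all its sections at
vertices of level `≥ 1` are trivial (i.e. it is an element of `Sym(X_{m_1})`). -/
def IsRooted (g : AutT m) : Prop :=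
  ∀ (n : ℕ) (w : Vertex m n), 0 < n → sectionAut g w = 1

/-- A *directed automorphism along the `0`-ray* (an element of `H_m̄`): it fixes the
`0`-ray, its sections away from the ray and its neighbours are trivial, and its
sections at neighbours of the ray are rooted. -/
def IsDirectedAut (g : AutT m) : Prop :=
  (∀ (n : ℕ) (w : Vertex m n), OnRay w → g.val n w = w) ∧
  (∀ (n : ℕ) (w : Vertex m n), ¬ OnRay w → ¬ IsNbr w → sectionAut g w = 1) ∧
  (∀ (n : ℕ) (w : Vertex m n), IsNbr w → IsRooted (sectionAut g w))

/-- The group `𝒜_n` of `n`-th level sections of `𝒜` along the `0`-ray. -/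
def Asub (hm : ∀ i, 0 < m i) (A : Subgroup (AutT m)) (n : ℕ) :
    Subgroup (AutT (shift m n)) :=
  Subgroup.closure {h | ∃ a ∈ A, h = sectionAut a (rayV hm n)}

/-- The group `ℬ_n` generated by the `n`-th level sections of `𝒜` at the neighbours
of the `0`-ray (trivial for `n = 0`, where there are no neighbours). -/
def Bsub (hm : ∀ i, 0 < m i) (A : Subgroup (AutT m)) : (n : ℕ) → Subgroup (AutT (shift m n))
  | 0 => ⊥
  | (k + 1) =>
    Subgroup.closure {h | ∃ a ∈ A, ∃ x : Fin (m k), (x : ℕ) ≠ 0 ∧ h = sectionAut a (nbrV hm x)}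

/-- The condition, for a word `w`, that position `i` is the position situated just
above the lowest non-zero letter of `w`. -/
def SpineCond {n : ℕ} (w : Vertex m n) (i : Fin n) : Prop :=
  ∃ p : Fin n, (w p : ℕ) ≠ 0 ∧ (∀ q : Fin n, (q : ℕ) < (p : ℕ) → (w q : ℕ) = 0) ∧
    (i : ℕ) = (p : ℕ) + 1

open Classical in
/-- The action of the spine-permutation automorphism `h_σ̄`: the letter just above
the lowest non-zero letter is permuted (by the permutation attached to its
alphabet size); all-zero words are fixed. -/
noncomputable def spineFun (σ : ∀ j : ℕ, Equiv.Perm (Fin j)) {n : ℕ} (w : Vertex m n) :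
    Vertex m n :=
  fun i => if SpineCond w i then (σ (m i)) (w i) else w i

/-! ### Probability measures, entropy, random walks -/

/-- `μ` is a probability measure (given by its density on a discrete group/set). -/
def IsProbMeas {G : Type*} (μ : G → ℝ) : Prop := (∀ g, 0 ≤ μ g) ∧ HasSum μ 1

/-- `μ` is symmetric. -/
def IsSymmMeas {G : Type*} [Group G] (μ : G → ℝ) : Prop := ∀ g, μ g⁻¹ = μ g

/-- Convolution of two measures on a discrete group. -/
noncomputable def conv {G : Type*} [Group G] (μ ν : G → ℝ) : G → ℝ :=
  fun g => ∑' h, μ h * ν (h⁻¹ * g)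

open Classical in
/-- `k`-fold convolution power `μ^{*k}` (with `μ^{*0} = δ_e`). -/
noncomputable def convPow {G : Type*} [Group G] (μ : G → ℝ) : ℕ → G → ℝ
  | 0 => fun g => if g = 1 then 1 else 0
  | (k + 1) => conv μ (convPow μ k)

/-- Shannon entropy `H(p) = -∑ p log p` of a discrete measure. -/
noncomputable def entropy {X : Type*} (p : X → ℝ) : ℝ := ∑' x, Real.negMulLog (p x)

/-- Shannon entropy, valued in `ℝ≥0∞`. -/
noncomputable def entropyE {X : Type*} (p : X → ℝ) : ℝ≥0∞ :=
  ∑' x, ENNReal.ofReal (Real.negMulLog (p x))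

/-- The Liouville property: every bounded `μ`-harmonic function is constant on the
subgroup generated by the support of `μ`. -/
def IsLiouville {G : Type*} [Group G] (μ : G → ℝ) : Prop :=
  ∀ f : G → ℝ, (∃ C, ∀ g, |f g| ≤ C) → (∀ g, f g = ∑' h, f (g * h) * μ h) →
    ∀ g ∈ Subgroup.closure (Function.support μ),
      ∀ h ∈ Subgroup.closure (Function.support μ), f g = f h

/-- The position of the right random walk after `t` steps, as a function of the
increments `s 0, s 1, …` (the group element `s_t ⋯ s_2 s_1`; with this convention,
applying it to a point `x` performs the corresponding right walk on any space the
group acts on from the right). -/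
def rwProd {G : Type*} [Group G] {k : ℕ} (s : Fin k → G) (t : ℕ) : G :=
  (((List.ofFn s).take t).reverse).prod

open Classical in
/-- The law of the pair (section/position) of the right `μ`-random walk observed at
the `j`-th visit of the trajectory `v·g_1, v·g_2, …` to the set `W`:
`visitLaw μ act v W sec j (h, u) = P(g at j-th visit has sec = h and position = u)`.
Here `act` is the (right) action used for the trajectory and `sec` the observable. -/
noncomputable def visitLaw {G X H : Type*} [Group G] (μ : G → ℝ)
    (act : G → X → X) (v : X) (W : Set X) (sec : G → H) (j : ℕ) : H × X → ℝ :=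
  fun p =>
    ∑' k : ℕ, ∑' s : Fin k → G,
      (∏ i, μ (s i)) *
        (if ((Finset.range k).filter fun t => act (rwProd s (t + 1)) v ∈ W).card = j
            ∧ act (rwProd s k) v ∈ W
            ∧ (sec (rwProd s k), act (rwProd s k) v) = p
          then 1 else 0)

/-! ### Electrical networks -/

/-- The Dirichlet energy of `f` with respect to the symmetric conductances `c`. -/
noncomputable def dirichlet {V : Type*} [Fintype V] (c : V → V → ℝ) (f : V → ℝ) : ℝ :=
  (1 / 2) * ∑ u : V, ∑ v : V, c u v * (f u - f v) ^ 2

/-- Effective conductance between the disjoint vertex sets `A` and `B`. -/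
noncomputable def effCond {V : Type*} [Fintype V] (c : V → V → ℝ) (A B : Set V) : ℝ :=
  sInf (dirichlet c '' {f | (∀ a ∈ A, f a = 1) ∧ (∀ b ∈ B, f b = 0)})

/-- Effective resistance between `A` and `B`, valued in `ℝ≥0∞` (infinite when the
effective conductance vanishes). -/
noncomputable def effResE {V : Type*} [Fintype V] (c : V → V → ℝ) (A B : Set V) : ℝ≥0∞ :=
  (ENNReal.ofReal (effCond c A B))⁻¹

open Classical in
/-- Conductances of the Schreier graph of the action on level `n` with (multi-)edges
given by a generating set: `c u v = #{s ∈ gens : u·s = v}` for `u ≠ v`. -/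
noncomputable def schreierCond (gens : Set (AutT m)) (n : ℕ) :
    Vertex m n → Vertex m n → ℝ :=
  fun u v => if u = v then 0 else (Set.ncard {s | s ∈ gens ∧ app s u = v} : ℝ)

open Classical in
/-- Conductances of the Schreier graph of the action on level `n`, with weights
`κ s` on the edge corresponding to the generator `s`. -/
noncomputable def schreierCondWt (S : Finset (AutT m)) (κ : AutT m → ℝ) (n : ℕ) :
    Vertex m n → Vertex m n → ℝ :=
  fun u v => if u = v then 0 else ∑ s ∈ S.filter (fun s => app s u = v), κ s

/-- The set `𝔸_n` of level-`n` vertices where some generator `s ∈ S` has a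
non-trivial section lying in `𝒜_n`. -/
def ASet (hm : ∀ i, 0 < m i) (A : Subgroup (AutT m)) (S : Finset (AutT m)) (n : ℕ) :
    Set (Vertex m n) :=
  {w | ∃ s ∈ S, sectionAut s w ∈ Asub hm A n ∧ sectionAut s w ≠ 1}

/-- The set `𝔹_n` of level-`n` vertices where some generator `s ∈ S` has a
non-trivial section lying in `ℬ_n`. -/
def BSet (hm : ∀ i, 0 < m i) (A : Subgroup (AutT m)) (S : Finset (AutT m)) (n : ℕ) :
    Set (Vertex m n) :=
  {w | ∃ s ∈ S, sectionAut s w ∈ Bsub hm A n ∧ sectionAut s w ≠ 1}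

/-- The orbit of a level-`n` vertex under a subgroup `G ≤ Aut(T_m)`. -/
def orbitOf (G : Subgroup (AutT m)) {n : ℕ} (v : Vertex m n) : Set (Vertex m n) :=
  {u | ∃ g : AutT m, g ∈ G ∧ app g v = u}

/-! ### Regular trees and automata -/

/-- The constant valency sequence (regular rooted tree `T_mm`). -/
abbrev constSeq (mm : ℕ) : ℕ → ℕ := fun _ => mm

/-- An invertible automaton over the alphabet of a regular tree: a finite set of
automorphisms closed under taking sections at one-letter words. -/
def IsAutomaton {mm : ℕ} (A : Finset (AutT (constSeq mm))) : Prop :=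
  ∀ a ∈ A, ∀ x : Vertex (constSeq mm) 1, sectionAut a x ∈ A

/-- Bounded activity: for every state `a`, the number of level-`n` words with
non-trivial section is bounded uniformly in `n`. -/
def IsBoundedActivity {mm : ℕ} (A : Finset (AutT (constSeq mm))) : Prop :=
  ∀ a ∈ A, ∃ B : ℕ, ∀ n : ℕ,
    Set.ncard {w : Vertex (constSeq mm) n | sectionAut a w ≠ 1} ≤ B

/-- Word length with respect to a finite symmetric generating set. -/
noncomputable def wordLen {G : Type*} [Group G] (S : Set G) (g : G) : ℕ :=
  sInf {k | ∃ l : List G, l.length = k ∧ (∀ s ∈ l, s ∈ S) ∧ l.prod = g}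

/-!
Let `h y` be the probability that the chain started at `y` hits `B` before `A`, so `h = 0` on
`A` and `h = 1` on `B`. Splitting the escape event according to the first step and the time at
which the chain reaches `B`, its probability is `(1/C) ∑_{a ∈ A} ∑_y c(a,y) h(y)`. The voltage
`v = 1 - h` is harmonic off `A ∪ B`; by Green's identity its energy is
`∑_u v(u) (Δv)(u) = ∑_{a ∈ A} ∑_y c(a,y) h(y)`, and by the Dirichlet principle this energy is
`C_eff(A,B)`.
-/

open Finset

section Network

variable {V : Type*} [Fintype V] {c : V → V → ℝ}

def laplacian (c : V → V → ℝ) (f : V → ℝ) (u : V) : ℝ :=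
  ∑ v, c u v * (f u - f v)

theorem dirichlet_nonneg (hnn : ∀ x y, 0 ≤ c x y) (f : V → ℝ) : 0 ≤ dirichlet c f :=
  mul_nonneg (by norm_num) <| sum_nonneg fun u _ => sum_nonneg fun v _ =>
    mul_nonneg (hnn u v) (sq_nonneg _)

theorem sum_sum_mul_sub_mul_sub (hsym : ∀ x y, c x y = c y x) (f g : V → ℝ) :
    ∑ u, ∑ v, c u v * ((f u - f v) * (g u - g v)) = 2 * ∑ u, g u * laplacian c f u := by
  have hswap : ∑ u, ∑ v, c u v * (f u - f v) * g v = -∑ u, ∑ v, c u v * (f u - f v) * g u := by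
    rw [sum_comm, ← sum_neg_distrib]
    refine sum_congr rfl fun u _ => ?_
    rw [← sum_neg_distrib]
    refine sum_congr rfl fun v _ => ?_
    rw [hsym]; ring
  have hexpand : ∀ u v, c u v * ((f u - f v) * (g u - g v))
      = c u v * (f u - f v) * g u - c u v * (f u - f v) * g v := fun u v => by ring
  have hlap : ∑ u, ∑ v, c u v * (f u - f v) * g u = ∑ u, g u * laplacian c f u := by
    simp only [laplacian, mul_sum]
    exact sum_congr rfl fun u _ => sum_congr rfl fun v _ => by ring
  simp only [hexpand, sum_sub_distrib, hswap, hlap]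
  ring

theorem dirichlet_eq_sum_mul_laplacian (hsym : ∀ x y, c x y = c y x) (f : V → ℝ) :
    dirichlet c f = ∑ u, f u * laplacian c f u := by
  rw [dirichlet]
  simp only [sq]
  rw [sum_sum_mul_sub_mul_sub hsym f f]
  ring

theorem dirichlet_add (hsym : ∀ x y, c x y = c y x) (f g : V → ℝ) :
    dirichlet c (f + g) = dirichlet c f + dirichlet c g + 2 * ∑ u, g u * laplacian c f u := by
  rw [← sum_sum_mul_sub_mul_sub hsym]
  simp only [dirichlet, Pi.add_apply, mul_sum, ← sum_add_distrib]
  refine sum_congr rfl fun u _ => sum_congr rfl fun v _ => ?_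
  ring

theorem effCond_eq_dirichlet_of_laplacian_eq_zero (hsym : ∀ x y, c x y = c y x)
    (hnn : ∀ x y, 0 ≤ c x y) {A B : Set V} {f : V → ℝ}
    (hA : ∀ a ∈ A, f a = 1) (hB : ∀ b ∈ B, f b = 0)
    (hf : ∀ u, u ∉ A → u ∉ B → laplacian c f u = 0) :
    effCond c A B = dirichlet c f := by
  refine IsLeast.csInf_eq ⟨⟨f, ⟨hA, hB⟩, rfl⟩, ?_⟩
  rintro _ ⟨g, ⟨hgA, hgB⟩, rfl⟩
  have hcross : ∑ u, (g - f) u * laplacian c f u = 0 := by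
    refine sum_eq_zero fun u _ => ?_
    by_cases huA : u ∈ A
    · simp [hA u huA, hgA u huA]
    by_cases huB : u ∈ B
    · simp [hB u huB, hgB u huB]
    · simp [hf u huA huB]
  have := dirichlet_add hsym f (g - f)
  rw [add_sub_cancel, hcross, mul_zero, add_zero] at this
  linarith [dirichlet_nonneg hnn (g - f)]

end Network

section Hitting

open Classical

variable {V : Type*} [Fintype V] {c : V → V → ℝ} {A B : Set V}

/-- The probability that the chain started at `y` first enters `A ∪ B` at time `ℓ`, and does
so in `B`. -/
noncomputable def hitProbAt (c : V → V → ℝ) (A B : Set V) : ℕ → V → ℝ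
  | 0 => fun y => if y ∈ B then 1 else 0
  | ℓ + 1 => fun y =>
    if y ∈ A ∨ y ∈ B then 0 else ∑ z, (c y z / ∑ w, c y w) * hitProbAt c A B ℓ z

theorem hitProbAt_succ_of_notMem {y : V} (hyA : y ∉ A) (hyB : y ∉ B) (ℓ : ℕ) :
    hitProbAt c A B (ℓ + 1) y = ∑ z, (c y z / ∑ w, c y w) * hitProbAt c A B ℓ z := by
  simp [hitProbAt, hyA, hyB]

theorem hitProbAt_nonneg (hnn : ∀ x y, 0 ≤ c x y) (ℓ : ℕ) (y : V) : 0 ≤ hitProbAt c A B ℓ y := by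
  induction ℓ generalizing y with
  | zero => unfold hitProbAt; positivity
  | succ ℓ ih =>
    unfold hitProbAt
    split_ifs
    · exact le_rfl
    · exact sum_nonneg fun z _ =>
        mul_nonneg (div_nonneg (hnn y z) (sum_nonneg fun w _ => hnn y w)) (ih z)

theorem sum_range_hitProbAt_le_one (hnn : ∀ x y, 0 ≤ c x y) (hpos : ∀ x, 0 < ∑ y, c x y)
    (L : ℕ) (y : V) : ∑ ℓ ∈ range L, hitProbAt c A B ℓ y ≤ 1 := by
  induction L generalizing y with
  | zero => simp
  | succ L ih =>
    rw [sum_range_succ']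
    by_cases hy : y ∈ A ∨ y ∈ B
    · simp only [hitProbAt, if_pos hy, sum_const_zero, zero_add]
      split_ifs <;> norm_num
    · rw [not_or] at hy
      simp only [hitProbAt_succ_of_notMem hy.1 hy.2]
      simp only [hitProbAt, if_neg hy.2, add_zero]
      rw [sum_comm]
      calc ∑ z, ∑ ℓ ∈ range L, (c y z / ∑ w, c y w) * hitProbAt c A B ℓ z
          = ∑ z, (c y z / ∑ w, c y w) * ∑ ℓ ∈ range L, hitProbAt c A B ℓ z := by
            simp only [mul_sum]
        _ ≤ ∑ z, c y z / ∑ w, c y w := sum_le_sum fun z _ =>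
            mul_le_of_le_one_right (div_nonneg (hnn y z) (hpos y).le) (ih z)
        _ = 1 := by rw [← sum_div, div_self (hpos y).ne']

theorem summable_hitProbAt (hnn : ∀ x y, 0 ≤ c x y) (hpos : ∀ x, 0 < ∑ y, c x y) (y : V) :
    Summable fun ℓ => hitProbAt c A B ℓ y :=
  summable_of_sum_range_le (fun ℓ => hitProbAt_nonneg hnn ℓ y)
    (sum_range_hitProbAt_le_one hnn hpos · y)

noncomputable def hitProb (c : V → V → ℝ) (A B : Set V) (y : V) : ℝ :=
  ∑' ℓ, hitProbAt c A B ℓ y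

theorem hitProb_of_mem_left (hAB : Disjoint A B) {y : V} (hy : y ∈ A) : hitProb c A B y = 0 := by
  have hzero : ∀ ℓ, hitProbAt c A B ℓ y = 0 := by
    rintro (_ | ℓ) <;> simp [hitProbAt, hy, Set.disjoint_left.mp hAB hy]
  simp [hitProb, hzero]

theorem hitProb_of_mem_right {y : V} (hy : y ∈ B) : hitProb c A B y = 1 := by
  rw [hitProb, tsum_eq_single 0 fun ℓ hℓ => ?_]
  · simp [hitProbAt, hy]
  · obtain ⟨ℓ, rfl⟩ := Nat.exists_eq_succ_of_ne_zero hℓ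
    simp [hitProbAt, hy]

theorem hitProb_eq_sum (hnn : ∀ x y, 0 ≤ c x y) (hpos : ∀ x, 0 < ∑ y, c x y)
    {y : V} (hyA : y ∉ A) (hyB : y ∉ B) :
    hitProb c A B y = ∑ z, (c y z / ∑ w, c y w) * hitProb c A B z := by
  rw [hitProb, (summable_hitProbAt hnn hpos y).tsum_eq_zero_add]
  simp only [hitProbAt_succ_of_notMem hyA hyB]
  simp only [hitProbAt, if_neg hyB, zero_add, hitProb]
  rw [Summable.tsum_finsetSum fun z _ => (summable_hitProbAt hnn hpos z).mul_left _]
  simp only [tsum_mul_left]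

end Hitting

section Paths

open Classical

def AvoidsUntilHits {V : Type*} (A B : Set V) {ℓ : ℕ} (x : Fin (ℓ + 1) → V) : Prop :=
  (∀ i : Fin (ℓ + 1), (i : ℕ) < ℓ → x i ∉ A ∧ x i ∉ B) ∧ x (Fin.last ℓ) ∈ B

theorem avoidsUntilHits_cons {V : Type*} {A B : Set V} {ℓ : ℕ} (y : V) (x : Fin (ℓ + 1) → V) :
    AvoidsUntilHits A B (Fin.cons y x : Fin (ℓ + 2) → V) ↔
      (y ∉ A ∧ y ∉ B) ∧ AvoidsUntilHits A B x := by
  simp [AvoidsUntilHits, Fin.forall_fin_succ, ← Fin.succ_last, and_assoc]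

theorem escape_condition_cons_iff {V : Type*} {A B : Set V} {ℓ : ℕ} (a : V)
    (x : Fin (ℓ + 1) → V) :
    ((Fin.cons a x : Fin (ℓ + 2) → V) 0 ∈ A ∧
        (∀ j : Fin (ℓ + 2), 0 < (j : ℕ) → (j : ℕ) < ℓ + 1 →
          (Fin.cons a x : Fin (ℓ + 2) → V) j ∉ A ∧ (Fin.cons a x : Fin (ℓ + 2) → V) j ∉ B) ∧
        (Fin.cons a x : Fin (ℓ + 2) → V) (Fin.last (ℓ + 1)) ∈ B) ↔
      a ∈ A ∧ AvoidsUntilHits A B x := by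
  simp [AvoidsUntilHits, Fin.forall_fin_succ, ← Fin.succ_last]

variable {V : Type*} [Fintype V] {c : V → V → ℝ} {A B : Set V}

theorem sum_pi_fin_succ {M : Type*} [AddCommMonoid M] {n : ℕ} (F : (Fin (n + 1) → V) → M) :
    ∑ x, F x = ∑ a, ∑ x : Fin n → V, F (Fin.cons a x) := by
  rw [← (Fin.consEquiv fun _ => V).sum_comp, Fintype.sum_prod_type]
  rfl

noncomputable def pathProb (c : V → V → ℝ) {ℓ : ℕ} (x : Fin (ℓ + 1) → V) : ℝ :=
  ∏ i : Fin ℓ, c (x i.castSucc) (x i.succ) / (∑ y, c (x i.castSucc) y)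

theorem pathProb_cons {ℓ : ℕ} (y : V) (x : Fin (ℓ + 1) → V) :
    pathProb c (Fin.cons y x : Fin (ℓ + 2) → V) = c y (x 0) / (∑ w, c y w) * pathProb c x :=
  Fin.prod_univ_succ _

theorem sum_pathProb_avoidsUntilHits (ℓ : ℕ) (y : V) :
    ∑ x : Fin ℓ → V, (if AvoidsUntilHits A B (Fin.cons y x : Fin (ℓ + 1) → V) then 1 else 0) *
      pathProb c (Fin.cons y x : Fin (ℓ + 1) → V) = hitProbAt c A B ℓ y := by
  induction ℓ generalizing y with
  | zero =>
    simp [AvoidsUntilHits, pathProb, hitProbAt, Fin.last]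
  | succ ℓ ih =>
    rw [sum_pi_fin_succ]
    simp only [avoidsUntilHits_cons, pathProb_cons, Fin.cons_zero]
    by_cases hy : y ∉ A ∧ y ∉ B
    · obtain ⟨hyA, hyB⟩ := hy
      simp only [hyA, hyB, not_false_eq_true, and_self, true_and,
        hitProbAt_succ_of_notMem hyA hyB, ← ih]
      simp only [mul_sum]
      exact sum_congr rfl fun z _ => sum_congr rfl fun x _ => by ring
    · have : y ∈ A ∨ y ∈ B := by tauto
      simp [hy, hitProbAt, this]

theorem sum_escape_paths (hpos : ∀ x, 0 < ∑ y, c x y) (ℓ : ℕ) :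
    ∑ x : Fin (ℓ + 2) → V,
        (if x 0 ∈ A
            ∧ (∀ j : Fin (ℓ + 2), 0 < (j : ℕ) → (j : ℕ) < ℓ + 1 → x j ∉ A ∧ x j ∉ B)
            ∧ x (Fin.last (ℓ + 1)) ∈ B
          then (1 : ℝ) else 0) *
          ((∑ y, c (x 0) y) / (∑ z, ∑ y, c z y)) * pathProb c x
      = (∑ a ∈ univ.filter (· ∈ A), ∑ y, c a y * hitProbAt c A B ℓ y) / (∑ z, ∑ y, c z y) := by
  rw [sum_filter, sum_div, sum_pi_fin_succ]
  refine sum_congr rfl fun a _ => ?_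
  simp only [escape_condition_cons_iff]
  simp only [Fin.cons_zero, pathProb_cons]
  by_cases ha : a ∈ A
  · calc _ = ∑ x : Fin (ℓ + 1) → V,
              c a (x 0) * ((if AvoidsUntilHits A B x then 1 else 0) * pathProb c x) /
                ∑ z, ∑ y, c z y :=
          sum_congr rfl fun x _ => by
            simp only [ha, true_and]
            field_simp [(hpos a).ne']
      _ = _ := by
          rw [← sum_div]
          simp only [ha, if_true, ← sum_pathProb_avoidsUntilHits, sum_pi_fin_succ (M := ℝ),
            Fin.cons_zero, mul_sum]
  · simp [ha]

end Paths

section Voltage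

variable {V : Type*} [Fintype V] {c : V → V → ℝ} {A B : Set V}

theorem laplacian_one_sub_hitProb (hnn : ∀ x y, 0 ≤ c x y) (hpos : ∀ x, 0 < ∑ y, c x y)
    {u : V} (huA : u ∉ A) (huB : u ∉ B) :
    laplacian c (fun y => 1 - hitProb c A B y) u = 0 := by
  have hmean : (∑ v, c u v) * hitProb c A B u = ∑ v, c u v * hitProb c A B v := by
    rw [hitProb_eq_sum hnn hpos huA huB, mul_sum]
    exact sum_congr rfl fun v _ => by field_simp [(hpos u).ne']
  simp only [laplacian, sub_sub_sub_cancel_left, mul_sub, sum_sub_distrib, ← sum_mul, hmean,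
    sub_self]

open Classical in
theorem effCond_eq_sum_hitProb (hsym : ∀ x y, c x y = c y x) (hnn : ∀ x y, 0 ≤ c x y)
    (hpos : ∀ x, 0 < ∑ y, c x y) (hAB : Disjoint A B) :
    effCond c A B = ∑ a ∈ univ.filter (· ∈ A), ∑ y, c a y * hitProb c A B y := by
  rw [effCond_eq_dirichlet_of_laplacian_eq_zero hsym hnn (f := fun y => 1 - hitProb c A B y)
      (fun a ha => by simp [hitProb_of_mem_left hAB ha])
      (fun b hb => by simp [hitProb_of_mem_right hb])
      (fun u huA huB => laplacian_one_sub_hitProb hnn hpos huA huB),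
    dirichlet_eq_sum_mul_laplacian hsym, sum_filter]
  refine sum_congr rfl fun u _ => ?_
  by_cases huA : u ∈ A
  · simp [huA, laplacian, hitProb_of_mem_left hAB huA]
  by_cases huB : u ∈ B
  · simp [huA, hitProb_of_mem_right huB]
  · simp [huA, laplacian_one_sub_hitProb hnn hpos huA huB]

theorem hasSum_sum_mul_hitProbAt (hnn : ∀ x y, 0 ≤ c x y) (hpos : ∀ x, 0 < ∑ y, c x y)
    (s : Finset V) :
    HasSum (fun ℓ => ∑ a ∈ s, ∑ y, c a y * hitProbAt c A B ℓ y)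
      (∑ a ∈ s, ∑ y, c a y * hitProb c A B y) :=
  hasSum_sum fun _ _ => hasSum_sum fun y _ =>
    (summable_hitProbAt hnn hpos y).hasSum.mul_left _

end Voltage

open Classical in
theorem stationary_escape_probability_general
    {V : Type*} [Fintype V] (c : V → V → ℝ)
    (hsym : ∀ x y, c x y = c y x) (hnn : ∀ x y, 0 ≤ c x y)
    (hpos : ∀ x, 0 < ∑ y, c x y)
    (A B : Set V) (hAB : Disjoint A B) :
    (∑' ℓ : ℕ, ∑ x : Fin (ℓ + 2) → V,
        (if x 0 ∈ A
            ∧ (∀ j : Fin (ℓ + 2), 0 < (j : ℕ) → (j : ℕ) < ℓ + 1 → x j ∉ A ∧ x j ∉ B)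
            ∧ x (Fin.last (ℓ + 1)) ∈ B
          then (1 : ℝ) else 0) *
          ((∑ y, c (x 0) y) / (∑ z, ∑ y, c z y)) *
          ∏ i : Fin (ℓ + 1), c (x i.castSucc) (x i.succ) / (∑ y, c (x i.castSucc) y))
      = effCond c A B / (∑ z, ∑ y, c z y) := by
  rw [effCond_eq_sum_hitProb hsym hnn hpos hAB]
  exact (((hasSum_sum_mul_hitProbAt hnn hpos _).div_const _).congr_fun
    fun ℓ => sum_escape_paths hpos ℓ).tsum_eq

open Classical in
/-- For the stationary Markov chain of a finite weighted graph,
the probability of starting in `A` and visiting `B` before returning to `A`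
equals `C_eff(A,B)/C`, where `C` is the total conductance `Σ_x c(x)`. -/
theorem stationary_escape_probability
    {V : Type*} [Fintype V] (c : V → V → ℝ)
    (hsym : ∀ x y, c x y = c y x) (hnn : ∀ x y, 0 ≤ c x y)
    (hpos : ∀ x, 0 < ∑ y, c x y)
    (A B : Set V) (hA : A.Nonempty) (hB : B.Nonempty) (hAB : Disjoint A B) :
    (∑' ℓ : ℕ, ∑ x : Fin (ℓ + 2) → V,
        (if x 0 ∈ A
            ∧ (∀ j : Fin (ℓ + 2), 0 < (j : ℕ) → (j : ℕ) < ℓ + 1 → x j ∉ A ∧ x j ∉ B)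
            ∧ x (Fin.last (ℓ + 1)) ∈ B
          then (1 : ℝ) else 0) *
          ((∑ y, c (x 0) y) / (∑ z, ∑ y, c z y)) *
          ∏ i : Fin (ℓ + 1), c (x i.castSucc) (x i.succ) / (∑ y, c (x i.castSucc) y))
      = effCond c A B / (∑ z, ∑ y, c z y) :=
  stationary_escape_probability_general c hsym hnn hpos A B hAB

end Paper
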